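/- arXiv:math/0212331 — 2 statements merged into one kernel-verified Lean document; each statement's English description precedes it below -/
import Mathlib

section
/- Let T be a contraction in L(E) and let Γ be a relatively compact subset of P(E). Then Tⁿ(λ) → δ_0 uniformly for λ ∈ Γ; that is, for every open neighborhood U of 0 in E and every ε > 0 there exists N such that (Tⁿ(λ))(E \ U) < ε for all n ≥ N and all λ ∈ Γ. -/
open MeasureTheory Topology Filter Set

namespace SemiSelfDecomp

variable (E : Type*) [MetricSpace E] [CompleteSpace E] [TopologicalSpace.SeparableSpace E]
  [AddCommGroup E] [Module ℝ E] [IsTopologicalAddGroup E] [ContinuousSMul ℝ E]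
  [MeasurableSpace E] [BorelSpace E]

variable {E}

/-- The Dirac measure at a point, as a probability measure. -/
noncomputable def diracP (x : E) : ProbabilityMeasure E :=
  ⟨Measure.dirac x, inferInstance⟩

/-- Convolution of probability measures. -/
noncomputable def pconv (μ ν : ProbabilityMeasure E) : ProbabilityMeasure E :=
  ⟨(μ : Measure E).conv (ν : Measure E), inferInstance⟩

/-- Pushforward of a probability measure under a continuous linear automorphism. -/
noncomputable def pmap (T : E ≃L[ℝ] E) (μ : ProbabilityMeasure E) : ProbabilityMeasure E :=
  μ.map (f := T) (T.continuous.measurable.aemeasurable)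

/-- The convolution product `f 0 ∗ f 1 ∗ ⋯ ∗ f (k-1)`. -/
noncomputable def convProd (f : ℕ → ProbabilityMeasure E) : ℕ → ProbabilityMeasure E
  | 0 => diracP 0
  | n + 1 => pconv (convProd f n) (f n)

/-- The `k`-fold convolution power of `μ`. -/
noncomputable def convPow (μ : ProbabilityMeasure E) : ℕ → ProbabilityMeasure E
  | 0 => diracP 0
  | n + 1 => pconv (convPow μ n) μ

/-- `μ` is infinitely divisible if for every `n ≥ 1` it has an `n`-th convolution root. -/
def InfinitelyDivisible (μ : ProbabilityMeasure E) : Prop :=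
  ∀ n : ℕ, 1 ≤ n → ∃ ν : ProbabilityMeasure E, convPow ν n = μ

/-- The set of infinitely divisible probability measures on `E`. -/
def IDiv : Set (ProbabilityMeasure E) := {μ | InfinitelyDivisible μ}

/-- A continuous convolution semigroup, parametrized by `t ∈ [0, ∞)` (as `ℝ≥0`). -/
def IsCCS (c : NNReal → ProbabilityMeasure E) : Prop :=
  Continuous c ∧ ∀ s t : NNReal, c (s + t) = pconv (c s) (c t)

/-- `μ` is embeddable if it is the time-one measure of a continuous convolution semigroup. -/
def Embeddable (μ : ProbabilityMeasure E) : Prop :=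
  ∃ c : NNReal → ProbabilityMeasure E, IsCCS c ∧ c 1 = μ

variable (E) in
/-- `E` is strongly root compact. -/
def StronglyRootCompact : Prop :=
  ∀ C : Set E, IsCompact C → ∃ C₀ : Set E, IsCompact C₀ ∧
    ∀ (n : ℕ) (x : ℕ → E), x n = 0 →
      (∀ i j : ℕ, 1 ≤ i → 1 ≤ j → i + j ≤ n →
        ∃ c₁ ∈ C, ∃ c₂ ∈ C, ∃ c₃ ∈ C, c₁ + x i + c₂ + x j = c₃ + x (i + j)) →
      ∀ i : ℕ, 1 ≤ i → i ≤ n → x i ∈ C₀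

/-- A triangular system with rows `(lam n i)_{i < k n}` is infinitesimal. -/
def IsInfinitesimalSystem (k : ℕ → ℕ) (lam : ℕ → ℕ → ProbabilityMeasure E) : Prop :=
  ∀ U : Set E, IsOpen U → (0 : E) ∈ U → ∀ ε : NNReal, 0 < ε →
    ∃ N : ℕ, ∀ n ≥ N, ∀ i < k n, lam n i Uᶜ < ε

/-- A continuous invertible linear operator is contracting if `Tⁿ x → 0` for every `x`. -/
def IsContraction (T : E ≃L[ℝ] E) : Prop :=
  ∀ x : E, Tendsto (fun n : ℕ => (T ^ n) x) atTop (𝓝 0)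

/-- `T` belongs to `𝓛₊`: a strongly continuous one-parameter group `(T_t)_{t > 0}` of
continuous invertible linear operators, multiplicative in `t`, with `T_t x → 0` as `t → 0⁺`. -/
def IsLPlus (T : ℝ → E ≃L[ℝ] E) : Prop :=
  (∀ s t : ℝ, 0 < s → 0 < t → T (s * t) = (T s).trans (T t)) ∧
  (∀ x : E, ContinuousOn (fun t : ℝ => T t x) (Set.Ioi 0)) ∧
  (∀ x : E, Tendsto (fun t : ℝ => T t x) (𝓝[>] 0) (𝓝 0))

/-- `μ` is `T`-semi-selfdecomposable. -/
def TSemiSelfdecomposable (T : E ≃L[ℝ] E) (μ : ProbabilityMeasure E) : Prop :=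
  ∃ (ν : ℕ → ProbabilityMeasure E) (N : ℕ → ℕ) (Ts : ℕ → E ≃L[ℝ] E) (x : ℕ → E),
    StrictMono N ∧
    IsInfinitesimalSystem N (fun n i => pmap (Ts n) (ν i)) ∧
    Tendsto (fun n => pconv (pmap (Ts n) (convProd ν (N n))) (diracP (x n))) atTop (𝓝 μ) ∧
    (∀ y : E, Tendsto (fun n => (Ts (n + 1)) ((Ts n).symm y)) atTop (𝓝 (T y)))

/-- `μ` is `T`-decomposable with co-factor `ν`. -/
def TDecomposableWith (T : E ≃L[ℝ] E) (μ ν : ProbabilityMeasure E) : Prop :=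
  μ = pconv (pmap T μ) ν

/-- `μ` is strongly `T`-decomposable with co-factor `ν`:
`μ = T(μ) ν` and `Tⁿ(μ) → δ₀`. -/
def StronglyTDecomposableWith (T : E ≃L[ℝ] E) (μ ν : ProbabilityMeasure E) : Prop :=
  TDecomposableWith T μ ν ∧
    Tendsto (fun n : ℕ => pmap (T ^ n) μ) atTop (𝓝 (diracP (0 : E)))

/-- The class `K̃(H, b, (T_t))`. -/
def KtildeClass (H : Set (ProbabilityMeasure E)) (b : ℝ) (T : ℝ → E ≃L[ℝ] E) :
    Set (ProbabilityMeasure E) :=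
  {μ | ∃ (μs : ℕ → ProbabilityMeasure E) (a : ℕ → ℝ) (k : ℕ → ℕ) (x : ℕ → E),
    (∀ n, μs n ∈ H) ∧ (∀ n, 0 < a n) ∧ StrictMono k ∧
    Tendsto (fun n => a n / a (n + 1)) atTop (𝓝 b) ∧
    Tendsto (fun n => pconv (pmap (T (1 / a n)) (convProd μs (k n))) (diracP (x n)))
      atTop (𝓝 μ)}

/-- The class `K(H, b, (T_t))`: as `K̃` but with an infinitesimal system. -/
def KClass (H : Set (ProbabilityMeasure E)) (b : ℝ) (T : ℝ → E ≃L[ℝ] E) :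
    Set (ProbabilityMeasure E) :=
  {μ | ∃ (μs : ℕ → ProbabilityMeasure E) (a : ℕ → ℝ) (k : ℕ → ℕ) (x : ℕ → E),
    (∀ n, μs n ∈ H) ∧ (∀ n, 0 < a n) ∧ StrictMono k ∧
    Tendsto (fun n => a n / a (n + 1)) atTop (𝓝 b) ∧
    IsInfinitesimalSystem k (fun n i => pmap (T (1 / a n)) (μs i)) ∧
    Tendsto (fun n => pconv (pmap (T (1 / a n)) (convProd μs (k n))) (diracP (x n)))
      atTop (𝓝 μ)}

/-- `H` is `(T_t)`-completely closed. -/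
def CompletelyClosed (T : ℝ → E ≃L[ℝ] E) (H : Set (ProbabilityMeasure E)) : Prop :=
  IsClosed H ∧ (∀ μ ∈ H, ∀ ν ∈ H, pconv μ ν ∈ H) ∧
    (∀ a : ℝ, 0 < a → ∀ x : E, ∀ μ ∈ H, pconv (pmap (T a) μ) (diracP x) ∈ H)

/-- `H ⊆ I(E)` is `(T_t)`-completely closed in the strong sense. -/
def CompletelyClosedStrong (T : ℝ → E ≃L[ℝ] E) (H : Set (ProbabilityMeasure E)) : Prop :=
  H ⊆ IDiv ∧ CompletelyClosed T H ∧
    ∀ μ ∈ H, ∃ c : NNReal → ProbabilityMeasure E, IsCCS c ∧ c 1 = μ ∧ ∀ t : NNReal, c t ∈ H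

/-- The nested classes `L_m(b, (T_t))` for finite `m`. -/
def LClass (b : ℝ) (T : ℝ → E ≃L[ℝ] E) : ℕ → Set (ProbabilityMeasure E)
  | 0 => KClass Set.univ b T
  | m + 1 => KClass (LClass b T m) b T

/-- The nested classes `L̃_m(b, (T_t))` for finite `m`. -/
def LtildeClass (b : ℝ) (T : ℝ → E ≃L[ℝ] E) : ℕ → Set (ProbabilityMeasure E)
  | 0 => KtildeClass Set.univ b T
  | m + 1 => KtildeClass (LtildeClass b T m) b T

/-- `L_m(b, (T_t))` for `m ∈ ℕ ∪ {∞}`. -/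
def LClassE (b : ℝ) (T : ℝ → E ≃L[ℝ] E) : ℕ∞ → Set (ProbabilityMeasure E)
  | (m : ℕ) => LClass b T m
  | ⊤ => ⋂ m : ℕ, LClass b T m

/-- The predecessor class `L_{m-1}(b,(T_t))`, with `L_{-1} = I(E)` and `L_{∞-1} = L_∞`. -/
def LClassPred (b : ℝ) (T : ℝ → E ≃L[ℝ] E) : ℕ∞ → Set (ProbabilityMeasure E)
  | (0 : ℕ) => IDiv
  | ((m + 1 : ℕ) : ℕ∞) => LClass b T m
  | ⊤ => ⋂ m : ℕ, LClass b T m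

/-- `L̃_m(b, (T_t))` for `m ∈ ℕ ∪ {∞}`. -/
def LtildeClassE (b : ℝ) (T : ℝ → E ≃L[ℝ] E) : ℕ∞ → Set (ProbabilityMeasure E)
  | (m : ℕ) => LtildeClass b T m
  | ⊤ => ⋂ m : ℕ, LtildeClass b T m

/-- The predecessor class `L̃_{m-1}(b,(T_t))`, with `L̃_{-1} = P(E)` and `L̃_{∞-1} = L̃_∞`. -/
def LtildeClassPred (b : ℝ) (T : ℝ → E ≃L[ℝ] E) : ℕ∞ → Set (ProbabilityMeasure E)
  | (0 : ℕ) => Set.univ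
  | ((m + 1 : ℕ) : ℕ∞) => LtildeClass b T m
  | ⊤ => ⋂ m : ℕ, LtildeClass b T m

/-- The class `K(H, [0,1], (T_t)) = ⋂_{0 < b < 1} K(H, b, (T_t))`. -/
def KClassI (H : Set (ProbabilityMeasure E)) (T : ℝ → E ≃L[ℝ] E) :
    Set (ProbabilityMeasure E) :=
  ⋂ b ∈ Set.Ioo (0 : ℝ) 1, KClass H b T

/-- The class `K̃(H, [0,1], (T_t)) = ⋂_{0 < b < 1} K̃(H, b, (T_t))`. -/
def KtildeClassI (H : Set (ProbabilityMeasure E)) (T : ℝ → E ≃L[ℝ] E) :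
    Set (ProbabilityMeasure E) :=
  ⋂ b ∈ Set.Ioo (0 : ℝ) 1, KtildeClass H b T

/-- The nested classes `L_m([0,1], (T_t))` for finite `m`. -/
def LClassI (T : ℝ → E ≃L[ℝ] E) : ℕ → Set (ProbabilityMeasure E)
  | 0 => KClassI Set.univ T
  | m + 1 => KClassI (LClassI T m) T

/-- The nested classes `L̃_m([0,1], (T_t))` for finite `m`. -/
def LtildeClassI (T : ℝ → E ≃L[ℝ] E) : ℕ → Set (ProbabilityMeasure E)
  | 0 => KtildeClassI Set.univ T
  | m + 1 => KtildeClassI (LtildeClassI T m) T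

/-- `L_m([0,1], (T_t))` for `m ∈ ℕ ∪ {∞}`. -/
def LClassIE (T : ℝ → E ≃L[ℝ] E) : ℕ∞ → Set (ProbabilityMeasure E)
  | (m : ℕ) => LClassI T m
  | ⊤ => ⋂ m : ℕ, LClassI T m

/-- `L̃_m([0,1], (T_t))` for `m ∈ ℕ ∪ {∞}`. -/
def LtildeClassIE (T : ℝ → E ≃L[ℝ] E) : ℕ∞ → Set (ProbabilityMeasure E)
  | (m : ℕ) => LtildeClassI T m
  | ⊤ => ⋂ m : ℕ, LtildeClassI T m

/-- `μ` is operator selfdecomposable with respect to `(T_t)`. -/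
def OperatorSelfdecomposable (T : ℝ → E ≃L[ℝ] E) (μ : ProbabilityMeasure E) : Prop :=
  ∃ (μs : ℕ → ProbabilityMeasure E) (x : ℕ → E) (b : ℕ → ℝ),
    (∀ n, 0 < b n) ∧
    IsInfinitesimalSystem (fun n => n) (fun n i => pmap (T (1 / b n)) (μs i)) ∧
    Tendsto (fun n => pconv (pmap (T (1 / b n)) (convProd μs n)) (diracP (x n)))
      atTop (𝓝 μ)

/-!
By Prokhorov, `Γ` is tight: all `λ ∈ Γ` give mass `< ε` outside one compact set `K`. A Baire
category (Banach–Steinhaus) argument upgrades the pointwise convergence `Tⁿ x → 0` to uniform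
convergence on `K`, so `Tⁿ K ⊆ U` for large `n`, and then `Tⁿ(λ)(Uᶜ) ≤ λ(Kᶜ) < ε`.
-/

open scoped NNReal ENNReal

section

variable {G H F : Type*} [AddCommGroup G] [TopologicalSpace G] [IsTopologicalAddGroup G]
  [BaireSpace G] [AddCommGroup H] [TopologicalSpace H] [IsTopologicalAddGroup H]
  [FunLike F G H] [AddMonoidHomClass F G H] [ContinuousMapClass F G H]

/-- Baire: the closed sets `{x | ∀ n ≥ m, f n x ∈ C}` cover `G`, so one of them contains a
translate `x₀ + O` of a neighbourhood of zero, and additivity moves `O` back to the origin. -/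
theorem exists_mem_nhds_zero_eventually_mapsTo_of_tendsto_zero {f : ℕ → F}
    (hf : ∀ x, Tendsto (fun n => f n x) atTop (𝓝 0)) {U : Set H} (hU : U ∈ 𝓝 0) :
    ∃ O ∈ 𝓝 (0 : G), ∀ᶠ n in atTop, MapsTo (f n) O U := by
  obtain ⟨V, hV, hVU⟩ := exists_nhds_half_neg hU
  obtain ⟨C, hC, hC_closed, hCV⟩ := exists_mem_nhds_isClosed_subset hV
  set A : ℕ → Set G := fun m => ⋂ n ≥ m, f n ⁻¹' C
  have hA_closed : ∀ m, IsClosed (A m) := fun m =>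
    isClosed_biInter fun n _ => hC_closed.preimage (map_continuous (f n))
  have hA_cover : ⋃ m, A m = univ := eq_univ_of_forall fun x => by
    simpa [A] using ((hf x).eventually_mem hC).exists_forall_of_atTop
  obtain ⟨m, x₀, hx₀⟩ := nonempty_interior_of_iUnion_of_closed hA_closed hA_cover
  have hO : (x₀ + ·) ⁻¹' interior (A m) ∈ 𝓝 (0 : G) :=
    (continuous_const_add x₀).continuousAt.preimage_mem_nhds
      (by simpa using isOpen_interior.mem_nhds hx₀)
  refine ⟨_, hO, eventually_atTop.2 ⟨m, fun n hn x hx => ?_⟩⟩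
  have hA_maps : ∀ y ∈ A m, f n y ∈ C := fun y hy => mem_iInter₂.1 hy n hn
  simpa using hVU _ (hCV (hA_maps _ (interior_subset hx))) _
    (hCV (hA_maps _ (interior_subset hx₀)))

theorem eventually_mapsTo_of_isCompact_of_tendsto_zero {f : ℕ → F}
    (hf : ∀ x, Tendsto (fun n => f n x) atTop (𝓝 0)) {K : Set G} (hK : IsCompact K)
    {U : Set H} (hU : U ∈ 𝓝 0) : ∀ᶠ n in atTop, MapsTo (f n) K U := by
  obtain ⟨V, hV, hVU⟩ := exists_nhds_zero_half hU
  obtain ⟨O, hO, hfO⟩ := exists_mem_nhds_zero_eventually_mapsTo_of_tendsto_zero hf hV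
  obtain ⟨t, -, hKt⟩ := hK.elim_nhds_subcover (fun y => (· - y) ⁻¹' O)
    fun y _ => (continuous_sub_right y).continuousAt.preimage_mem_nhds (by simpa using hO)
  have hft : ∀ᶠ n in atTop, ∀ y ∈ t, f n y ∈ V :=
    t.eventually_all.2 fun y _ => (hf y).eventually_mem hV
  filter_upwards [hfO, hft] with n hnO hnt x hx
  obtain ⟨y, hy, hxy⟩ := mem_iUnion₂.1 (hKt hx)
  simpa using hVU _ (hnt y hy) _ (hnO hxy)

end

/-- For a contraction `T` and a relatively compact set `Γ` of probability
measures, `Tⁿ(λ) → δ₀` uniformly for `λ ∈ Γ`. -/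
theorem stmt0 (T : E ≃L[ℝ] E) (hT : IsContraction T)
    (Γ : Set (ProbabilityMeasure E)) (hΓ : IsCompact (closure Γ)) :
    ∀ U : Set E, IsOpen U → (0 : E) ∈ U → ∀ ε : NNReal, 0 < ε →
      ∃ N : ℕ, ∀ n ≥ N, ∀ lam ∈ Γ, (pmap (T ^ n) lam) Uᶜ < ε := by
  intro U hU h0U ε hε
  obtain ⟨K, hK, hΓK⟩ := isTightMeasureSet_iff_exists_isCompact_measure_compl_le.1
    (isTightMeasureSet_of_isCompact_closure hΓ) ((ε / 2 : ℝ≥0) : ℝ≥0∞) (by positivity)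
  obtain ⟨N, hN⟩ := eventually_atTop.1
    (eventually_mapsTo_of_isCompact_of_tendsto_zero hT hK (hU.mem_nhds h0U))
  refine ⟨N, fun n hn lam hlam => ?_⟩
  calc pmap (T ^ n) lam Uᶜ = lam ((T ^ n) ⁻¹' Uᶜ) :=
        ProbabilityMeasure.map_apply _ _ hU.isClosed_compl.measurableSet
    _ ≤ lam Kᶜ := lam.apply_mono (compl_subset_compl.2 (hN n hn).subset_preimage)
    _ ≤ ε / 2 := by
      rw [← ENNReal.coe_le_coe, ProbabilityMeasure.ennreal_coeFn_eq_coeFn_toMeasure]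
      exact hΓK _ ⟨lam, hlam, rfl⟩
    _ < ε := NNReal.half_lt_self hε.ne'

end SemiSelfDecomp
end

section
/- Let (T_t) ∈ L₊ and let Γ be a relatively compact subset of P(E). Then T_t(λ) → δ_0 as t → 0 uniformly for λ ∈ Γ; that is, for every ε > 0 and every open neighborhood U of 0 in E there exists s > 0 such that (T_t(λ))(E \ U) < ε for all 0 < t < s and all λ ∈ Γ. -/
/-!
By Prokhorov's theorem (in its converse direction) the relatively compact set `Γ` is tight, so it
suffices to show that `T t → 0` uniformly on each compact set `K` as `t → 0⁺`. For each `x` the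
orbit `{T t x | 0 < t ≤ 1}` lies in a compact set (the orbit map extends continuously to `[0, 1]`),
hence is bounded; since `E` is a Baire space, the Banach–Steinhaus argument makes
`{T t | 0 < t ≤ 1}` equicontinuous at `0`. Together with pointwise convergence this gives
`T t z → 0` as `(t, z) → (0⁺, y)` for every `y`, which compactness of `K` turns into uniform
convergence on `K`.
-/

open MeasureTheory Topology Filter Set

namespace SemiSelfDecomp

variable (E : Type*) [MetricSpace E] [CompleteSpace E] [TopologicalSpace.SeparableSpace E]
  [AddCommGroup E] [Module ℝ E] [IsTopologicalAddGroup E] [ContinuousSMul ℝ E]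
  [MeasurableSpace E] [BorelSpace E]

variable {E}

open scoped NNReal Pointwise

theorem exists_isCompact_image_Ioc_subset {X : Type*} [TopologicalSpace X] {f : ℝ → X}
    {a b : ℝ} {l : X} (hf : ContinuousOn f (Ioc a b)) (hlim : Tendsto f (𝓝[>] a) (𝓝 l)) :
    ∃ K, IsCompact K ∧ f '' Ioc a b ⊆ K := by
  refine ⟨Function.update f a l '' Icc a b, isCompact_Icc.image_of_continuousOn ?_, ?_⟩
  · intro t ht
    rcases eq_or_lt_of_le ht.1 with rfl | hat
    · rw [continuousWithinAt_update_same, Icc_sdiff_left]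
      exact hlim.mono_left (nhdsWithin_mono _ Ioc_subset_Ioi_self)
    · rw [continuousWithinAt_update_of_ne hat.ne']
      exact (hf t ⟨hat, ht.2⟩).mono_of_mem_nhdsWithin
        (mem_nhdsWithin.mpr ⟨Ioi a, isOpen_Ioi, hat, fun x hx ↦ ⟨hx.1, hx.2.2⟩⟩)
  · rintro _ ⟨t, ht, rfl⟩
    exact ⟨t, Ioc_subset_Icc_self ht, Function.update_of_ne ht.1.ne' _ _⟩

theorem eventually_nhds_zero_forall_mem_of_isVonNBounded {ι G H : Type*}
    [AddCommGroup G] [Module ℝ G] [TopologicalSpace G] [ContinuousAdd G]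
    [ContinuousConstSMul ℝ G] [BaireSpace G]
    [AddCommGroup H] [Module ℝ H] [TopologicalSpace H] [IsTopologicalAddGroup H]
    (f : ι → G →L[ℝ] H)
    (hf : ∀ x, Bornology.IsVonNBounded ℝ (range fun i ↦ f i x)) {U : Set H}
    (hU : U ∈ 𝓝 0) : ∀ᶠ x in 𝓝 0, ∀ i, f i x ∈ U := by
  obtain ⟨V, hV, hVU⟩ := exists_nhds_half_neg hU
  obtain ⟨W, hW, hW_closed, hWV⟩ := exists_mem_nhds_isClosed_subset hV
  set A := ⋂ i, f i ⁻¹' W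
  have hA_closed : IsClosed A := isClosed_iInter fun i ↦ hW_closed.preimage (f i).continuous
  have hA_cover : ⋃ n : ℕ, ((n : ℝ) + 1) • A = univ := by
    refine eq_univ_of_forall fun x ↦ ?_
    obtain ⟨r, hr⟩ := absorbs_iff_norm.mp (hf x hW)
    obtain ⟨n, hn⟩ := exists_nat_ge r
    have hn0 : (n : ℝ) + 1 ≠ 0 := by positivity
    refine mem_iUnion.mpr ⟨n, (mem_smul_set_iff_inv_smul_mem₀ hn0 _ _).mpr <| mem_iInter.mpr ?_⟩
    intro i
    have hrn : r ≤ ‖(n : ℝ) + 1‖ := by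
      rw [Real.norm_eq_abs, abs_of_pos (by positivity)]
      linarith
    obtain ⟨w, hw, hwx⟩ := hr _ hrn ⟨i, rfl⟩
    simp [← hwx, smul_smul, inv_mul_cancel₀ hn0, hw]
  obtain ⟨n, hn⟩ := nonempty_interior_of_iUnion_of_closed
    (fun n : ℕ ↦ hA_closed.smul_of_ne_zero (by positivity : (n : ℝ) + 1 ≠ 0)) hA_cover
  rw [interior_smul₀ (by positivity : (n : ℝ) + 1 ≠ 0), smul_set_nonempty] at hn
  obtain ⟨x₀, hx₀⟩ := hn
  have hx₀A : ∀ᶠ x in 𝓝 0, x₀ + x ∈ A :=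
    (continuous_const_add x₀).tendsto' 0 x₀ (add_zero x₀) (mem_interior_iff_mem_nhds.mp hx₀)
  filter_upwards [hx₀A] with x hx i
  simpa using hVU _ (hWV (mem_iInter.mp hx i)) _ (hWV (mem_iInter.mp (interior_subset hx₀) i))

theorem tendsto_prod_nhds_of_tendsto_prod_nhds_zero {ι 𝓕 G H : Type*} [AddGroup G]
    [TopologicalSpace G] [ContinuousSub G] [AddCommGroup H] [TopologicalSpace H]
    [ContinuousAdd H] [FunLike 𝓕 G H] [AddMonoidHomClass 𝓕 G H] {f : ι → 𝓕}
    {l : Filter ι} (h₀ : Tendsto (fun p : ι × G ↦ f p.1 p.2) (l ×ˢ 𝓝 0) (𝓝 0)) {y : G}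
    (hy : Tendsto (fun i ↦ f i y) l (𝓝 0)) :
    Tendsto (fun p : ι × G ↦ f p.1 p.2) (l ×ˢ 𝓝 y) (𝓝 0) := by
  have hshift : Tendsto (fun p : ι × G ↦ (p.1, p.2 - y)) (l ×ˢ 𝓝 y) (l ×ˢ 𝓝 0) :=
    tendsto_fst.prodMk (by simpa using (tendsto_snd (f := l) (g := 𝓝 y)).sub_const y)
  simpa [map_sub] using (hy.comp tendsto_fst).add (h₀.comp hshift)

section

variable {F : Type*} [MetricSpace F] [AddCommGroup F] [Module ℝ F]

theorem pmap_apply_compl_le [MeasurableSpace F] [BorelSpace F] {T : F ≃L[ℝ] F}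
    {μ : ProbabilityMeasure F} {K U : Set F}
    (hU : MeasurableSet U) (hKU : MapsTo T K U) : pmap T μ Uᶜ ≤ μ Kᶜ := by
  rw [pmap, ProbabilityMeasure.map_apply _ _ hU.compl]
  exact ProbabilityMeasure.apply_mono _ fun x hx hxK ↦ hx (hKU hxK)

namespace IsLPlus

variable [IsTopologicalAddGroup F] [ContinuousSMul ℝ F] {T : ℝ → F ≃L[ℝ] F}

theorem isVonNBounded_orbit (hT : IsLPlus T) (x : F) :
    Bornology.IsVonNBounded ℝ ((fun t ↦ T t x) '' Ioc 0 1) := by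
  obtain ⟨K, hK, hsub⟩ := exists_isCompact_image_Ioc_subset
    ((hT.2.1 x).mono Ioc_subset_Ioi_self) (hT.2.2 x)
  exact (hK.isVonNBounded ℝ).subset hsub

theorem tendsto_prod_nhds_zero [CompleteSpace F] (hT : IsLPlus T) :
    Tendsto (fun p : ℝ × F ↦ T p.1 p.2) (𝓝[>] 0 ×ˢ 𝓝 0) (𝓝 0) := by
  intro U hU
  have hequi := eventually_nhds_zero_forall_mem_of_isVonNBounded
    (fun t : Ioc (0 : ℝ) 1 ↦ (T t : F →L[ℝ] F))
    (fun x ↦ by simpa [image_eq_range] using hT.isVonNBounded_orbit x) hU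
  exact mem_map.mpr <| mem_of_superset (prod_mem_prod (Ioc_mem_nhdsGT one_pos) hequi)
    fun p hp ↦ hp.2 ⟨p.1, hp.1⟩

theorem tendsto_prod_nhds [CompleteSpace F] (hT : IsLPlus T) (y : F) :
    Tendsto (fun p : ℝ × F ↦ T p.1 p.2) (𝓝[>] 0 ×ˢ 𝓝 y) (𝓝 0) :=
  tendsto_prod_nhds_of_tendsto_prod_nhds_zero hT.tendsto_prod_nhds_zero (hT.2.2 y)

theorem eventually_mapsTo_of_isCompact [CompleteSpace F] (hT : IsLPlus T) {K U : Set F}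
    (hK : IsCompact K) (hU : U ∈ 𝓝 0) : ∀ᶠ t in 𝓝[>] 0, MapsTo (T t) K U :=
  Eventually.curry (hK.mem_prod_nhdsSet_of_forall fun y _ ↦ hT.tendsto_prod_nhds y hU)
    |>.mono fun _ h ↦ h.self_of_nhdsSet

end IsLPlus

end

/-- If `(T_t) ∈ 𝓛₊` and `Γ` is relatively compact in `P(E)`, then
`T_t(λ) → δ₀` as `t → 0` uniformly for `λ ∈ Γ`. -/
theorem stmt17 (T : ℝ → E ≃L[ℝ] E) (hT : IsLPlus T)
    (Γ : Set (ProbabilityMeasure E)) (hΓ : IsCompact (closure Γ)) :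
    ∀ ε : NNReal, 0 < ε → ∀ U : Set E, IsOpen U → (0 : E) ∈ U →
      ∃ s : ℝ, 0 < s ∧ ∀ t : ℝ, 0 < t → t < s → ∀ lam ∈ Γ,
        (pmap (T t) lam) Uᶜ < ε := by
  intro ε hε U hU hU0
  obtain ⟨K, hK, hKΓ⟩ := (isTightMeasureSet_iff_exists_isCompact_measure_compl_le.mp
    (isTightMeasureSet_of_isCompact_closure hΓ)) (ε / 2 : ℝ≥0) (by simpa using hε.ne')
  obtain ⟨s, hs, hsK⟩ := mem_nhdsGT_iff_exists_Ioo_subset.mp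
    (hT.eventually_mapsTo_of_isCompact hK (hU.mem_nhds hU0))
  refine ⟨s, hs, fun t ht hts lam hlam ↦ ?_⟩
  have hlamK : lam Kᶜ ≤ ε / 2 := by
    rw [← ENNReal.coe_le_coe, ProbabilityMeasure.ennreal_coeFn_eq_coeFn_toMeasure]
    exact hKΓ _ ⟨lam, hlam, rfl⟩
  calc pmap (T t) lam Uᶜ ≤ lam Kᶜ := pmap_apply_compl_le hU.measurableSet (hsK ⟨ht, hts⟩)
    _ ≤ ε / 2 := hlamK
    _ < ε := NNReal.half_lt_self hε.ne'

end SemiSelfDecomp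
end
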